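/- For S_C ∈ [2, 16/5), the relation S_Q = 2(8−S_C)^{3/2} / (3·√(6(4−S_C))) follows from eliminating R between S_C = 4(6R−1) and S_Q = 4(1−2R)^{3/2}/√(1−3R), and S_Q > S_C on this interval with S_Q = S_C = 16/5 at the right endpoint. -/

import Mathlib

/-!
Substituting `R = (S + 4) / 24` gives `1 - 2R = (8 - S) / 12` and `1 - 3R = (4 - S) / 8`, so both
expressions for the quantum score are nonnegative with the same square `2 (8 - S)³ / (27 (4 - S))`.
Comparing with `S²`,
  `S_Q² - S² = (5S - 16)² (S + 4) / (27 (4 - S))`,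
whose double root at `S = 16/5` gives both the strict inequality and the equality at the endpoint.
-/

open Real

noncomputable section

def quantumScore (R : ℝ) : ℝ :=
  4 * (1 - 2 * R) ^ ((3 : ℝ) / 2) / √(1 - 3 * R)

def quantumScoreOfClassical (S : ℝ) : ℝ :=
  2 * (8 - S) ^ ((3 : ℝ) / 2) / (3 * √(6 * (4 - S)))

end

lemma sq_rpow_three_halves {x : ℝ} (hx : 0 ≤ x) : (x ^ ((3 : ℝ) / 2)) ^ 2 = x ^ 3 := by
  rw [← Real.rpow_natCast, ← Real.rpow_mul hx]
  norm_num

lemma quantumScore_nonneg {R : ℝ} (hR : R ≤ 1 / 2) : 0 ≤ quantumScore R := by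
  have : 0 ≤ 1 - 2 * R := by linarith
  unfold quantumScore
  positivity

lemma quantumScoreOfClassical_nonneg {S : ℝ} (hS : S ≤ 8) :
    0 ≤ quantumScoreOfClassical S := by
  have : 0 ≤ 8 - S := by linarith
  unfold quantumScoreOfClassical
  positivity

lemma sq_quantumScore {R : ℝ} (hR : R ≤ 1 / 3) :
    quantumScore R ^ 2 = 16 * (1 - 2 * R) ^ 3 / (1 - 3 * R) := by
  rw [quantumScore, div_pow, mul_pow, sq_rpow_three_halves (by linarith),
    Real.sq_sqrt (by linarith)]
  ring

lemma sq_quantumScoreOfClassical {S : ℝ} (hS : S < 4) :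
    quantumScoreOfClassical S ^ 2 = 2 * (8 - S) ^ 3 / (27 * (4 - S)) := by
  have : 4 - S ≠ 0 := by linarith
  rw [quantumScoreOfClassical, div_pow, mul_pow, mul_pow, sq_rpow_three_halves (by linarith),
    Real.sq_sqrt (by linarith)]
  field_simp
  ring

lemma quantumScore_eq_quantumScoreOfClassical {S : ℝ} (hS : S < 4) :
    quantumScore ((S + 4) / 24) = quantumScoreOfClassical S := by
  have : 4 - S ≠ 0 := by linarith
  rw [← sq_eq_sq₀ (quantumScore_nonneg (by linarith))
      (quantumScoreOfClassical_nonneg (by linarith)),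
    sq_quantumScore (by linarith), sq_quantumScoreOfClassical hS,
    show 1 - 2 * ((S + 4) / 24) = (8 - S) / 12 by ring,
    show 1 - 3 * ((S + 4) / 24) = (4 - S) / 8 by ring]
  field_simp
  ring

lemma sq_quantumScoreOfClassical_sub_sq {S : ℝ} (hS : S < 4) :
    quantumScoreOfClassical S ^ 2 - S ^ 2 = (5 * S - 16) ^ 2 * (S + 4) / (27 * (4 - S)) := by
  have : 4 - S ≠ 0 := by linarith
  rw [sq_quantumScoreOfClassical hS]
  field_simp
  ring

lemma lt_quantumScoreOfClassical {S : ℝ} (hS : S < 4) (hS' : S ≠ 16 / 5) :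
    S < quantumScoreOfClassical S := by
  have hq := quantumScoreOfClassical_nonneg (S := S) (by linarith)
  rcases lt_or_ge S 0 with hneg | hnonneg
  · linarith
  have hgap : 0 < (5 * S - 16) ^ 2 * (S + 4) / (27 * (4 - S)) := by
    have : 5 * S - 16 ≠ 0 := fun h => hS' (by linarith)
    have : 0 < 4 - S := by linarith
    positivity
  rw [← sq_quantumScoreOfClassical_sub_sq hS, sub_pos] at hgap
  exact (le_abs_self S).trans_lt (abs_lt_of_sq_lt_sq hgap hq)

lemma quantumScoreOfClassical_sixteen_fifths : quantumScoreOfClassical (16 / 5) = 16 / 5 := by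
  have hsq : quantumScoreOfClassical (16 / 5) ^ 2 = (16 / 5) ^ 2 := by
    have := sq_quantumScoreOfClassical_sub_sq (S := 16 / 5) (by norm_num)
    norm_num at this ⊢
    linarith
  exact (sq_eq_sq₀ (quantumScoreOfClassical_nonneg (by norm_num)) (by norm_num)).1 hsq

theorem quantum_score_in_terms_of_classical_general (SC : ℝ)
    (h2 : SC < 16/5) (R : ℝ) (hR : R = (SC + 4) / 24) :
    SC = 4 * (6 * R - 1) ∧
    4 * (1 - 2 * R) ^ ((3 : ℝ) / 2) / Real.sqrt (1 - 3 * R)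
      = 2 * (8 - SC) ^ ((3 : ℝ) / 2) / (3 * Real.sqrt (6 * (4 - SC))) ∧
    SC < 2 * (8 - SC) ^ ((3 : ℝ) / 2) / (3 * Real.sqrt (6 * (4 - SC))) ∧
    2 * (8 - (16/5 : ℝ)) ^ ((3 : ℝ) / 2) / (3 * Real.sqrt (6 * (4 - 16/5)))
      = 16/5 := by
  subst hR
  exact ⟨by ring, quantumScore_eq_quantumScoreOfClassical (by linarith),
    lt_quantumScoreOfClassical (by linarith) h2.ne, quantumScoreOfClassical_sixteen_fifths⟩

theorem quantum_score_in_terms_of_classical (SC : ℝ) (h1 : 2 ≤ SC)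
    (h2 : SC < 16/5) (R : ℝ) (hR : R = (SC + 4) / 24) :
    SC = 4 * (6 * R - 1) ∧
    4 * (1 - 2 * R) ^ ((3 : ℝ) / 2) / Real.sqrt (1 - 3 * R)
      = 2 * (8 - SC) ^ ((3 : ℝ) / 2) / (3 * Real.sqrt (6 * (4 - SC))) ∧
    SC < 2 * (8 - SC) ^ ((3 : ℝ) / 2) / (3 * Real.sqrt (6 * (4 - SC))) ∧
    2 * (8 - (16/5 : ℝ)) ^ ((3 : ℝ) / 2) / (3 * Real.sqrt (6 * (4 - 16/5)))
      = 16/5 :=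
  quantum_score_in_terms_of_classical_general SC h2 R hR
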